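/- arXiv:2405.07591 — 2 statements merged into one kernel-verified Lean document; each statement's English description precedes it below -/
import Mathlib

section
/- (Carrier property of the Shapley value for PDGs with costs.) Let v ∈ Γ^N and k ∈ {1, …, m}, and suppose C ∈ K_k is a carrier of the partially defined game (v, K_k), i.e., for every T ∈ K_k the intersection T ∩ C lies in K_k ∪ {∅} and v(T) = v(T ∩ C). Then φ̃_{i,k}(v) = −(Σ_{l=1}^{k} c_l)/n for every player i ∉ C. -/
open Finset

variable {ι : Type*}

/-- The Harsanyi dividend function of a partially defined game `(v, K)`:
`d_{v,K}(∅) = 0`, and for nonempty `S`, `d_{v,K}(S) = v S - ∑_{T ⊊ S} d_{v,K}(T)`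
if `S ∈ K`, and `d_{v,K}(S) = 0` otherwise. -/
noncomputable def dividend [DecidableEq ι] (K : Finset (Finset ι)) (v : Finset ι → ℝ) :
    Finset ι → ℝ
  | S =>
    if S ∈ K ∧ S.Nonempty then
      v S - ∑ T ∈ S.ssubsets.attach, dividend K v T.1
    else 0
  termination_by S => S.card
  decreasing_by exact Finset.card_lt_card (Finset.mem_ssubsets.mp T.2)

/-- `v ∈ Γ^N`: a TU-game (`v ∅ = 0`) with nonnegative worths and `v N > 0`. -/
def GammaN [Fintype ι] (v : Finset ι → ℝ) : Prop :=
  v ∅ = 0 ∧ (∀ S : Finset ι, 0 ≤ v S) ∧ 0 < v Finset.univ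

/-- `L = {{1}, …, {n}, N}`: the singletons together with the grand coalition. -/
def coalL (ι : Type*) [Fintype ι] [DecidableEq ι] : Finset (Finset ι) :=
  (Finset.univ.image fun i : ι => ({i} : Finset ι)) ∪ {Finset.univ}

/-- `K_k = L ∪ {S_1, …, S_k}`: the known coalitions after the `k`-th examination,
for an enumeration `E` of the unknown coalitions. -/
def knownK [Fintype ι] [DecidableEq ι] (E : ℕ → Finset ι) (k : ℕ) : Finset (Finset ι) :=
  coalL ι ∪ (Finset.Icc 1 k).image E

/-- `E` (restricted to `{1, …, m}` with `m = 2^n - n - 2`) is an injective enumeration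
`S_1, …, S_m` of the coalitions in `2^N ∖ (L ∪ {∅})`, i.e. the proper coalitions with
at least two members. -/
def IsEnum [Fintype ι] [DecidableEq ι] (m : ℕ) (E : ℕ → Finset ι) : Prop :=
  m = 2 ^ Fintype.card ι - Fintype.card ι - 2 ∧
  Set.InjOn E (Set.Icc 1 m) ∧
  (∀ l ∈ Set.Icc 1 m, 2 ≤ (E l).card ∧ E l ≠ Finset.univ) ∧
  (∀ T : Finset ι, 2 ≤ T.card → T ≠ Finset.univ → ∃ l ∈ Set.Icc 1 m, E l = T)

/-- The costs satisfy `0 ≤ c_1 ≤ c_2 ≤ … ≤ c_m`. -/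
def CostsOk (m : ℕ) (c : ℕ → ℝ) : Prop :=
  (∀ l ∈ Set.Icc 1 m, 0 ≤ c l) ∧ ∀ l, 1 ≤ l → l + 1 ≤ m → c l ≤ c (l + 1)

/-- The Shapley value for partially defined games with costs:
`φ̃_{i,k}(v) = ∑_{S ⊊ N, i ∈ S} d_{v,K_k}(S)/|S| + (d_{v,K_k}(N) - ∑_{l=1}^k c_l)/n`. -/
noncomputable def phiTilde [Fintype ι] [DecidableEq ι] (E : ℕ → Finset ι) (c : ℕ → ℝ)
    (v : Finset ι → ℝ) (i : ι) (k : ℕ) : ℝ :=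
  (∑ S ∈ Finset.univ.filter (fun S : Finset ι => S ⊂ Finset.univ ∧ i ∈ S),
      dividend (knownK E k) v S / S.card) +
    (dividend (knownK E k) v Finset.univ - ∑ l ∈ Finset.Icc 1 k, c l) / (Fintype.card ι)

/-- `C` is a carrier of the partially defined game `(v, K)`: `C ∈ K` and for every
`T ∈ K`, `T ∩ C ∈ K ∪ {∅}` and `v(T) = v(T ∩ C)`. -/
def IsCarrier [DecidableEq ι] (K : Finset (Finset ι)) (v : Finset ι → ℝ)
    (C : Finset ι) : Prop :=
  C ∈ K ∧ ∀ T ∈ K, (T ∩ C ∈ K ∨ T ∩ C = ∅) ∧ v T = v (T ∩ C)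

lemma dividend_def [DecidableEq ι] (K : Finset (Finset ι)) (v : Finset ι → ℝ)
    (S : Finset ι) :
    dividend K v S =
      if S ∈ K ∧ S.Nonempty then v S - ∑ T ∈ S.ssubsets, dividend K v T else 0 := by
  rw [dividend]
  congr 1
  exact congrArg (v S - ·) (Finset.sum_attach S.ssubsets (dividend K v))

lemma powerset_dividend_sum [DecidableEq ι] (K : Finset (Finset ι)) (v : Finset ι → ℝ)
    (hv0 : v ∅ = 0) (A : Finset ι) (hA : A ∈ K ∨ A = ∅) :
    ∑ T ∈ A.powerset, dividend K v T = v A := by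
  rcases A.eq_empty_or_nonempty with h | h
  · subst h
    rw [Finset.powerset_empty, Finset.sum_singleton, dividend_def]
    simp [hv0]
  · rcases hA with hA | hA
    · have hmem : A ∈ A.powerset := Finset.mem_powerset_self A
      have := Finset.sum_erase_add A.powerset (dividend K v) hmem
      rw [← this]
      have herase : A.powerset.erase A = A.ssubsets := rfl
      rw [herase, dividend_def]
      rw [if_pos ⟨hA, h⟩]
      ring
    · exact absurd hA h.ne_empty

lemma dividend_eq_zero_of_not_subset [DecidableEq ι] (K : Finset (Finset ι))
    (v : Finset ι → ℝ) (C : Finset ι) (hC : IsCarrier K v C) (hv0 : v ∅ = 0) :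
    ∀ S : Finset ι, ¬ S ⊆ C → dividend K v S = 0 := by
  intro S
  induction S using Finset.strongInduction with
  | _ S ih =>
    intro hS
    rw [dividend_def]
    split_ifs with h
    · obtain ⟨hSK, hSne⟩ := h
      have hsplit : ∑ T ∈ S.ssubsets, dividend K v T
          = ∑ T ∈ (S ∩ C).powerset, dividend K v T := by
        refine (Finset.sum_subset ?_ ?_).symm
        · intro T hT
          rw [Finset.mem_powerset] at hT
          rw [Finset.mem_ssubsets]
          refine ⟨hT.trans Finset.inter_subset_left, ?_⟩
          intro hST
          exact hS ((hST.trans hT).trans Finset.inter_subset_right)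
        · intro T hT hT2
          rw [Finset.mem_ssubsets] at hT
          rw [Finset.mem_powerset] at hT2
          apply ih T hT
          intro hTC
          exact hT2 (Finset.subset_inter hT.1 hTC)
      rw [hsplit, powerset_dividend_sum K v hv0 _ (hC.2 S hSK).1, ← (hC.2 S hSK).2,
        sub_self]
    · rfl

/-- **Carrier.** Let `v ∈ Γ^N`, `k ∈ {1, …, m}`, and suppose `C ∈ K_k`
is a carrier of `(v, K_k)`. Then `φ̃_{i,k}(v) = -(∑_{l=1}^k c_l)/n` for every
player `i ∉ C`. -/
theorem phiTilde_carrier [Fintype ι] [DecidableEq ι]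
    (hn : 2 ≤ Fintype.card ι)
    (m : ℕ) (E : ℕ → Finset ι) (hE : IsEnum m E)
    (c : ℕ → ℝ) (hc : CostsOk m c)
    (v : Finset ι → ℝ) (hv : GammaN v)
    (k : ℕ) (hk1 : 1 ≤ k) (hkm : k ≤ m)
    (C : Finset ι) (hC : IsCarrier (knownK E k) v C)
    (i : ι) (hi : i ∉ C) :
    phiTilde E c v i k = -(∑ l ∈ Finset.Icc 1 k, c l) / (Fintype.card ι) := by
  have hzero := dividend_eq_zero_of_not_subset (knownK E k) v C hC hv.1
  unfold phiTilde
  have h1 : ∑ S ∈ Finset.univ.filter (fun S : Finset ι => S ⊂ Finset.univ ∧ i ∈ S),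
      dividend (knownK E k) v S / S.card = 0 := by
    apply Finset.sum_eq_zero
    intro S hS
    rw [Finset.mem_filter] at hS
    rw [hzero S (fun hSC => hi (hSC hS.2.2)), zero_div]
  have h2 : dividend (knownK E k) v (Finset.univ : Finset ι) = 0 :=
    hzero _ (fun hU => hi (hU (Finset.mem_univ i)))
  rw [h1, h2, zero_add, zero_sub, neg_div]
end

section
/- (Fairness of the first stage.) For every game v ∈ Γ^N and all players i, j ∈ N: φ̃_{i,0}(v) − φ̃_{j,0}(v) = v({i}) − v({j}). -/
open Finset

variable {ι : Type*}

lemma dividend_empty [DecidableEq ι] (K : Finset (Finset ι)) (v : Finset ι → ℝ) :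
    dividend K v ∅ = 0 := by
  rw [dividend]; simp

lemma dividend_singleton [DecidableEq ι] (K : Finset (Finset ι)) (v : Finset ι → ℝ)
    (i : ι) (h : ({i} : Finset ι) ∈ K) : dividend K v {i} = v {i} := by
  rw [dividend]
  have h1 : ({i} : Finset ι).ssubsets = {∅} := by
    ext T
    simp [Finset.mem_ssubsets, Finset.ssubset_singleton_iff]
  rw [if_pos ⟨h, Finset.singleton_nonempty i⟩]
  rw [Finset.sum_attach _ (fun T => dividend K v T), h1]
  simp [dividend_empty]

lemma dividend_not_mem [DecidableEq ι] (K : Finset (Finset ι)) (v : Finset ι → ℝ)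
    (S : Finset ι) (h : S ∉ K) : dividend K v S = 0 := by
  rw [dividend]
  simp [h]

lemma phiTilde_zero [Fintype ι] [DecidableEq ι]
    (hn : 2 ≤ Fintype.card ι) (E : ℕ → Finset ι) (c : ℕ → ℝ)
    (v : Finset ι → ℝ) (i : ι) :
    phiTilde E c v i 0 = v {i} + dividend (knownK E 0) v Finset.univ / (Fintype.card ι) := by
  have hK : knownK E 0 = coalL ι := by
    simp [knownK]
  have hsum : (∑ S ∈ Finset.univ.filter (fun S : Finset ι => S ⊂ Finset.univ ∧ i ∈ S),
      dividend (knownK E 0) v S / S.card) = v {i} := by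
    rw [Finset.sum_eq_single ({i} : Finset ι)]
    · rw [hK, dividend_singleton]
      · simp
      · simp [coalL]
    · intro S hS hne
      simp only [Finset.mem_filter, Finset.mem_univ, true_and] at hS
      have : S ∉ knownK E 0 := by
        rw [hK]
        intro hmem
        simp only [coalL, Finset.mem_union, Finset.mem_image, Finset.mem_singleton] at hmem
        rcases hmem with ⟨a, -, ha⟩ | rfl
        · subst ha
          have hai : i = a := by simpa using hS.2
          exact hne (by rw [hai])
        · exact lt_irrefl _ hS.1
      rw [dividend_not_mem _ _ _ this]
      simp
    · intro h
      exfalso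
      apply h
      simp only [Finset.mem_filter, Finset.mem_univ, true_and]
      refine ⟨Finset.ssubset_univ_iff.mpr ?_, Finset.mem_singleton_self i⟩
      intro hE
      have := Finset.card_univ (α := ι)
      rw [← hE] at this
      simp at this
      omega
  rw [phiTilde, hsum]
  simp

/-- **Fairness of the first stage.** For every game `v ∈ Γ^N` and all
players `i, j ∈ N`: `φ̃_{i,0}(v) - φ̃_{j,0}(v) = v({i}) - v({j})`. -/
theorem phiTilde_fairness_first_stage [Fintype ι] [DecidableEq ι]
    (hn : 2 ≤ Fintype.card ι)
    (m : ℕ) (E : ℕ → Finset ι) (hE : IsEnum m E)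
    (c : ℕ → ℝ) (hc : CostsOk m c)
    (v : Finset ι → ℝ) (hv : GammaN v)
    (i j : ι) :
    phiTilde E c v i 0 - phiTilde E c v j 0 = v {i} - v {j} := by
  rw [phiTilde_zero hn, phiTilde_zero hn]
  ring
end
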